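/- arXiv:1107.3166 — 5 statements merged into one kernel-verified Lean document; each statement's English description precedes it below -/
import Mathlib

section
/- For all nonnegative real numbers x, y, z with x + y + z = 1, we have x + y/3 + z^3 ≥ 1/6. -/
/-! Eliminating `y`, the left side is `2x/3 + 1/3 - z/3 + z^3`. The cube lies above its tangent
line at `1/3`, so `z^3 ≥ z/3 - 2/27` and the left side is at least `2x/3 + 7/27 ≥ 7/27 > 1/6`. -/

theorem cube_tangent_le_cube (a z : ℝ) (h : 0 ≤ z + 2 * a) :
    a ^ 3 + 3 * a ^ 2 * (z - a) ≤ z ^ 3 := by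
  have gap : z ^ 3 - (a ^ 3 + 3 * a ^ 2 * (z - a)) = (z - a) ^ 2 * (z + 2 * a) := by ring
  linarith [mul_nonneg (sq_nonneg (z - a)) h]

theorem simplex_ineq_one_sixth_general (x y z : ℝ) (hx : 0 ≤ x) (hz : 0 ≤ z)
    (hsum : x + y + z = 1) : x + y / 3 + z ^ 3 ≥ 1 / 6 := by
  have tangent := cube_tangent_le_cube (1 / 3) z (by linarith)
  linarith

theorem simplex_ineq_one_sixth (x y z : ℝ) (hx : 0 ≤ x) (hy : 0 ≤ y) (hz : 0 ≤ z)
    (hsum : x + y + z = 1) : x + y / 3 + z ^ 3 ≥ 1 / 6 :=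
  simplex_ineq_one_sixth_general x y z hx hz hsum
end

section
/- For all nonnegative real numbers x, y, z with x + y + z = 1, we have 3x + y + 3z^3 ≥ 2/3 (equivalently x + y/3 + z^3 ≥ 2/9). -/
/-! The left side equals `1 + 2x + (3z³ - z)`, and the cubic `3z³ - z` is at least `-2/9` on
`[-2/3, ∞)`, touching its tangent line at `z = 1/3`. So the left side is even at least `7/9`. -/

theorem sub_two_ninths_le_three_mul_pow_three {z : ℝ} (hz : -(2 / 3) ≤ z) :
    z - 2 / 9 ≤ 3 * z ^ 3 := by
  have hfactor : 3 * z ^ 3 - (z - 2 / 9) = 3 * (z - 1 / 3) ^ 2 * (z + 2 / 3) := by ring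
  have : 0 ≤ 3 * (z - 1 / 3) ^ 2 * (z + 2 / 3) := by
    have : 0 ≤ z + 2 / 3 := by linarith
    positivity
  linarith

theorem simplex_ineq_two_ninths_general (x y z : ℝ) (hx : 0 ≤ x) (hz : 0 ≤ z)
    (hsum : x + y + z = 1) : 3 * x + y + 3 * z ^ 3 ≥ 2 / 3 := by
  have hcubic := sub_two_ninths_le_three_mul_pow_three (by linarith : -(2 / 3) ≤ z)
  calc 3 * x + y + 3 * z ^ 3 = 1 + 2 * x + (3 * z ^ 3 - z) := by linear_combination hsum
    _ ≥ 2 / 3 := by linarith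

theorem simplex_ineq_two_ninths (x y z : ℝ) (hx : 0 ≤ x) (hy : 0 ≤ y) (hz : 0 ≤ z)
    (hsum : x + y + z = 1) : 3 * x + y + 3 * z ^ 3 ≥ 2 / 3 :=
  simplex_ineq_two_ninths_general x y z hx hz hsum
end

section
/- For reals S₀, B̄, T̄ ≥ 0 with S₀ + B̄ + T̄ = S̄ > 0, we have S₀ + B̄/3 + T̄³/S̄² ≥ S̄/6. -/
theorem lemma1_core (S₀ B T Sbar : ℝ) (hS₀ : 0 ≤ S₀) (hB : 0 ≤ B) (hT : 0 ≤ T)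
    (hsum : S₀ + B + T = Sbar) (hSbar : 0 < Sbar) :
    S₀ + B / 3 + T ^ 3 / Sbar ^ 2 ≥ Sbar / 6 := by
  rw [ge_iff_le,
    show S₀ + B / 3 + T ^ 3 / Sbar ^ 2 = (S₀ * Sbar ^ 2 + B / 3 * Sbar ^ 2 + T ^ 3) / Sbar ^ 2 by
      field_simp,
    le_div_iff₀ (by positivity)]
  nlinarith [mul_nonneg hT (sq_nonneg (3*T - 2*Sbar)), mul_nonneg hSbar.le (sq_nonneg (T - Sbar)),
    mul_nonneg hSbar.le (sq_nonneg (3*T - Sbar)), mul_nonneg hT (sq_nonneg (3*T - Sbar)),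
    mul_nonneg hS₀ (sq_nonneg Sbar), mul_nonneg hB (sq_nonneg Sbar)]
end

section
/- For nonnegative reals S₀, B̄, T̄ with S₀ + B̄ + T̄ = S̄ > 0, we have 3S₀ + B̄ + 3T̄³/S̄² ≥ (2/3)·S̄. -/
/-- The tangent line of `t ↦ 3 t³ / s²` at `t = s / 3`; the gap is `(3t - s)² (3t + 2s) / (9s²)`. -/
theorem sub_le_three_mul_pow_three_div_sq {s t : ℝ} (hs : s ≠ 0) (ht : 0 ≤ 3 * t + 2 * s) :
    t - 2 * s / 9 ≤ 3 * t ^ 3 / s ^ 2 := by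
  have gap : 3 * t ^ 3 / s ^ 2 - (t - 2 * s / 9) =
      (3 * t - s) ^ 2 * (3 * t + 2 * s) / (9 * s ^ 2) := by
    field_simp
    ring
  have : 0 ≤ (3 * t - s) ^ 2 * (3 * t + 2 * s) / (9 * s ^ 2) := by positivity
  linarith

theorem lemma2_core_general (S₀ B T Sbar : ℝ) (hS₀ : 0 ≤ S₀) (hT : 0 ≤ T)
    (hsum : S₀ + B + T = Sbar) (hSbar : 0 < Sbar) :
    3 * S₀ + B + 3 * T ^ 3 / Sbar ^ 2 ≥ (2 / 3) * Sbar := by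
  have tangent := sub_le_three_mul_pow_three_div_sq hSbar.ne' (by linarith : 0 ≤ 3 * T + 2 * Sbar)
  linarith

theorem lemma2_core (S₀ B T Sbar : ℝ) (hS₀ : 0 ≤ S₀) (hB : 0 ≤ B) (hT : 0 ≤ T)
    (hsum : S₀ + B + T = Sbar) (hSbar : 0 < Sbar) :
    3 * S₀ + B + 3 * T ^ 3 / Sbar ^ 2 ≥ (2 / 3) * Sbar :=
  lemma2_core_general S₀ B T Sbar hS₀ hT hsum hSbar
end

section
/- Let k ≥ 1 be a natural number and S ≥ 12 a real. Suppose r ≥ (2/3)·S̄_i³·S_i/S³ for all i ∈ {1,...,k}, where S̄_i = S - S_i ≥ 0 and Σ_i S̄_i ≥ S - 1. Then r ≥ min_i S_i/(2k³). -/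
/-! By pigeonhole some `i` has `S - Si i ≥ (S - 1) / k`. At that `i` the bound on `r`, together with
`S³ ≤ (4/3)(S - 1)³` for `S ≥ 12` (as `(12/11)³ < 4/3`), gives `r ≥ Si i / (2k³) ≥ min Si / (2k³)`. -/

lemma cube_le_four_thirds_mul_sub_one_cube {S : ℝ} (hS : 12 ≤ S) :
    S ^ 3 ≤ 4 / 3 * (S - 1) ^ 3 := by
  nlinarith [mul_nonneg (sq_nonneg S) (sub_nonneg.2 hS)]

lemma div_two_mul_cube_le_of_sub_one_le_mul {S a b c : ℝ} (hS : 12 ≤ S) (ha : 0 ≤ a)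
    (hc : 0 < c) (hb : S - 1 ≤ c * b) :
    a / (2 * c ^ 3) ≤ 2 / 3 * b ^ 3 * a / S ^ 3 := by
  have hb0 : 0 ≤ b := nonneg_of_mul_nonneg_right (by linarith) hc
  have hcube : (S - 1) ^ 3 ≤ (c * b) ^ 3 := pow_le_pow_left₀ (by linarith) hb 3
  have hS3 : S ^ 3 ≤ 4 / 3 * (c * b) ^ 3 := by
    linarith [cube_le_four_thirds_mul_sub_one_cube hS]
  rw [div_le_div_iff₀ (by positivity) (by positivity)]
  nlinarith [mul_le_mul_of_nonneg_left hS3 ha]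

theorem lemma2_full_general (k : ℕ) (S r : ℝ) (hS : S ≥ 12)
    (Si : Fin k → ℝ) (hSi : ∀ i, 0 ≤ Si i ∧ Si i ≤ S)
    (hsum : ∑ i, (S - Si i) ≥ S - 1)
    (hne : (Finset.univ : Finset (Fin k)).Nonempty)
    (hr : ∀ i, r ≥ (2 / 3) * (S - Si i) ^ 3 * Si i / S ^ 3) :
    r ≥ (Finset.univ.inf' hne Si) / (2 * k ^ 3) := by
  have hk : (0 : ℝ) < k := Nat.cast_pos.2 (Fin.pos hne.choose)
  have hsum' : ∑ _i : Fin k, (S - 1) / k ≤ ∑ i, (S - Si i) := by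
    rwa [Finset.sum_const, Finset.card_univ, Fintype.card_fin, nsmul_eq_mul,
      mul_div_cancel₀ _ hk.ne']
  obtain ⟨i, -, hi⟩ := Finset.exists_le_of_sum_le hne hsum'
  calc Finset.univ.inf' hne Si / (2 * k ^ 3)
      ≤ Si i / (2 * k ^ 3) := by gcongr; exact Finset.inf'_le _ (Finset.mem_univ i)
    _ ≤ 2 / 3 * (S - Si i) ^ 3 * Si i / S ^ 3 :=
        div_two_mul_cube_le_of_sub_one_le_mul hS (hSi i).1 hk ((div_le_iff₀' hk).1 hi)
    _ ≤ r := hr i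

theorem lemma2_full (k : ℕ) (hk : 1 ≤ k) (S r : ℝ) (hS : S ≥ 12)
    (Si : Fin k → ℝ) (hSi : ∀ i, 0 ≤ Si i ∧ Si i ≤ S)
    (hsum : ∑ i, (S - Si i) ≥ S - 1)
    (hne : (Finset.univ : Finset (Fin k)).Nonempty)
    (hr : ∀ i, r ≥ (2 / 3) * (S - Si i) ^ 3 * Si i / S ^ 3) :
    r ≥ (Finset.univ.inf' hne Si) / (2 * k ^ 3) :=
  lemma2_full_general k S r hS Si hSi hsum hne hr
end
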